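/- arXiv:1703.07672 — 3 statements merged into one kernel-verified Lean document; each statement's English description precedes it below -/
import Mathlib

section
/- Let z ∈ ℂ, not in the quotient field ℚ(ω) of the Eisenstein integers 𝔈, and let {a_n}, {z_n} be its infinite continued fraction expansion and iteration sequence over 𝔈 with respect to a nearest integer algorithm. Then z is badly approximable with respect to 𝔈 (i.e., there exists δ > 0 such that |z − p/q| ≥ δ/|q|² for all p, q ∈ 𝔈 with q ≠ 0) if and only if the sequence {|a_n|} is bounded. -/
open Complex

noncomputable def eisOmega : ℂ := (-1 + Real.sqrt 3 * Complex.I) / 2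
def IsEis (a : ℂ) : Prop := ∃ x y : ℤ, a = (x : ℂ) + (y : ℂ) * eisOmega

/-!
Write `q_n, p_n` for the convergent denominators and numerators and `E_n = q_n z - p_n`.
The iteration gives `E_{n+1} = (a_n - z_n) E_n`, so `|E_n|` decays geometrically, and
the determinant identity `q_n E_{n+1} - q_{n+1} E_n = ±1` then keeps `|q_{n+1} E_n| ≤ 2`.

If `z` is badly approximable, testing it against `p_{n+1}/q_{n+1}` gives
`δ ≤ |q_{n+1} E_{n+1}| = |q_{n+1} E_n| / |z_{n+1}| ≤ 2 / |z_{n+1}|`, which bounds `|z_n|`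
and hence `|a_n|`. Conversely, for `p/q` choose the index `n` at which `|E_n|` crosses
`1/(2|q|)`. The ring element `u = q_{n+2} p - q p_{n+2} = q E_{n+2} - q_{n+2} (q z - p)` is
either `0`, and then `q z - p` is a nonzero ring multiple of `E_{n+2}`, or of norm at least
`1`; with bounded quotients both alternatives give `|q| |q z - p| ≫ 1`.
-/

section Convergents

variable {K : Type*} [CommRing K] (a : ℕ → K)

/-- Indices are shifted by one from the usual `p_{-1} = 1, p_0 = a_0`: `cfNum a (n + 1)` is the
numerator of `[a 0; a 1, …, a n]`. -/
def cfNum : ℕ → K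
  | 0 => 1
  | 1 => a 0
  | n + 2 => a (n + 1) * cfNum (n + 1) + cfNum n

def cfDen : ℕ → K
  | 0 => 0
  | 1 => 1
  | n + 2 => a (n + 1) * cfDen (n + 1) + cfDen n

def cfErr (z : K) (n : ℕ) : K := cfDen a n * z - cfNum a n

variable (z : K)

@[simp] theorem cfErr_zero : cfErr a z 0 = -1 := by simp [cfErr, cfNum, cfDen]

@[simp] theorem cfErr_one : cfErr a z 1 = z - a 0 := by simp [cfErr, cfNum, cfDen]

theorem cfErr_add_two (n : ℕ) :
    cfErr a z (n + 2) = a (n + 1) * cfErr a z (n + 1) + cfErr a z n := by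
  simp only [cfErr, cfNum, cfDen]; ring

theorem cfDen_mul_cfNum_sub (n : ℕ) :
    cfDen a (n + 1) * cfNum a n - cfDen a n * cfNum a (n + 1) = (-1) ^ n := by
  induction n with
  | zero => simp [cfNum, cfDen]
  | succ n ih => simp only [cfNum, cfDen]; linear_combination (-1 : K) * ih

theorem cfDen_mul_cfErr_sub (n : ℕ) :
    cfDen a n * cfErr a z (n + 1) - cfDen a (n + 1) * cfErr a z n = (-1) ^ n := by
  simp only [cfErr]; linear_combination cfDen_mul_cfNum_sub a n

variable {a} {S : Subring K}

theorem cfNum_mem (ha : ∀ n, a n ∈ S) : ∀ n, cfNum a n ∈ S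
  | 0 => S.one_mem
  | 1 => ha 0
  | n + 2 => S.add_mem (S.mul_mem (ha _) (cfNum_mem ha (n + 1))) (cfNum_mem ha n)

theorem cfDen_mem (ha : ∀ n, a n ∈ S) : ∀ n, cfDen a n ∈ S
  | 0 => S.zero_mem
  | 1 => S.one_mem
  | n + 2 => S.add_mem (S.mul_mem (ha _) (cfDen_mem ha (n + 1))) (cfDen_mem ha n)

end Convergents

/-- The nearest-integer condition is not part of this; the estimates below only need
`‖z_n - a_n‖ ≤ ρ` with `2 ρ ^ 2 < 1`. -/
structure IsCFExpansion {K : Type*} [Field K] (z : K) (a zs : ℕ → K) : Prop where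
  zs_zero : zs 0 = z
  zs_ne : ∀ n, zs n ≠ a n
  zs_succ : ∀ n, zs (n + 1) = (zs n - a n)⁻¹

namespace IsCFExpansion

section Field

variable {K : Type*} [Field K] {z : K} {a zs : ℕ → K}

theorem cfErr_succ (h : IsCFExpansion z a zs) (n : ℕ) :
    cfErr a z (n + 1) = (a n - zs n) * cfErr a z n := by
  induction n with
  | zero => simp [h.zs_zero]
  | succ n ih =>
    have hn : zs n - a n ≠ 0 := sub_ne_zero.2 (h.zs_ne n)
    rw [cfErr_add_two, ih, h.zs_succ]
    field_simp
    ring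

end Field

section Normed

variable {K : Type*} [NormedField K] {z : K} {a zs : ℕ → K} {ρ : ℝ}

theorem norm_cfErr_eq (h : IsCFExpansion z a zs) (n : ℕ) :
    ‖cfErr a z n‖ = ‖zs (n + 1)‖ * ‖cfErr a z (n + 1)‖ := by
  have hn : ‖zs n - a n‖ ≠ 0 := norm_ne_zero_iff.2 (sub_ne_zero.2 (h.zs_ne n))
  rw [h.cfErr_succ, h.zs_succ, norm_mul, norm_inv, ← norm_neg (a n - zs n), neg_sub]
  field_simp

theorem norm_cfErr_succ_le (h : IsCFExpansion z a zs) (hρ : ∀ n, ‖zs n - a n‖ ≤ ρ) (n : ℕ) :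
    ‖cfErr a z (n + 1)‖ ≤ ρ * ‖cfErr a z n‖ := by
  rw [h.cfErr_succ, norm_mul, norm_sub_rev]
  exact mul_le_mul_of_nonneg_right (hρ n) (norm_nonneg _)

theorem norm_cfErr_add_two_le (h : IsCFExpansion z a zs) (hρ : ∀ n, ‖zs n - a n‖ ≤ ρ)
    (n : ℕ) : ‖cfErr a z (n + 2)‖ ≤ ρ ^ 2 * ‖cfErr a z n‖ := by
  have hρ0 : 0 ≤ ρ := (norm_nonneg _).trans (hρ 0)
  calc ‖cfErr a z (n + 2)‖ ≤ ρ * ‖cfErr a z (n + 1)‖ := h.norm_cfErr_succ_le hρ (n + 1)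
    _ ≤ ρ * (ρ * ‖cfErr a z n‖) := by gcongr; exact h.norm_cfErr_succ_le hρ n
    _ = ρ ^ 2 * ‖cfErr a z n‖ := by ring

theorem norm_cfErr_le_pow (h : IsCFExpansion z a zs) (hρ : ∀ n, ‖zs n - a n‖ ≤ ρ) (n : ℕ) :
    ‖cfErr a z n‖ ≤ ρ ^ n := by
  have hρ0 : 0 ≤ ρ := (norm_nonneg _).trans (hρ 0)
  induction n with
  | zero => simp
  | succ n ih =>
    calc ‖cfErr a z (n + 1)‖ ≤ ρ * ‖cfErr a z n‖ := h.norm_cfErr_succ_le hρ n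
      _ ≤ ρ ^ (n + 1) := by rw [pow_succ']; gcongr

theorem exists_norm_cfErr_succ_lt_le (h : IsCFExpansion z a zs) (hρ : ∀ n, ‖zs n - a n‖ ≤ ρ)
    (hρ1 : ρ < 1) {t : ℝ} (ht0 : 0 < t) (ht1 : t ≤ 1) :
    ∃ n, ‖cfErr a z (n + 1)‖ < t ∧ t ≤ ‖cfErr a z n‖ := by
  have hex : ∃ n, ‖cfErr a z n‖ < t := by
    obtain ⟨n, hn⟩ := exists_pow_lt_of_lt_one ht0 hρ1
    exact ⟨n, (h.norm_cfErr_le_pow hρ n).trans_lt hn⟩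
  obtain ⟨n, hn⟩ : ∃ n, Nat.find hex = n + 1 := by
    refine Nat.exists_eq_succ_of_ne_zero fun h0 => ?_
    have := Nat.find_spec hex
    simp [h0] at this
    linarith
  exact ⟨n, hn ▸ Nat.find_spec hex, not_lt.1 (Nat.find_min hex (by omega))⟩

theorem norm_cfDen_mul_cfErr_le_two (h : IsCFExpansion z a zs) (hρ : ∀ n, ‖zs n - a n‖ ≤ ρ)
    (hρ2 : 2 * ρ ^ 2 ≤ 1) (n : ℕ) : ‖cfDen a (n + 1) * cfErr a z n‖ ≤ 2 := by
  induction n with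
  | zero => simp [cfDen]
  | succ n ih =>
    have hdet : cfDen a (n + 2) * cfErr a z (n + 1)
        = cfDen a (n + 1) * cfErr a z (n + 2) - (-1) ^ (n + 1) := by
      linear_combination -cfDen_mul_cfErr_sub a z (n + 1)
    calc ‖cfDen a (n + 2) * cfErr a z (n + 1)‖
        ≤ ‖cfDen a (n + 1)‖ * ‖cfErr a z (n + 2)‖ + 1 := by
          rw [hdet]; simpa using norm_sub_le (cfDen a (n + 1) * cfErr a z (n + 2)) ((-1) ^ (n + 1))
      _ ≤ ‖cfDen a (n + 1)‖ * (ρ ^ 2 * ‖cfErr a z n‖) + 1 := by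
          gcongr; exact h.norm_cfErr_add_two_le hρ n
      _ = ρ ^ 2 * ‖cfDen a (n + 1) * cfErr a z n‖ + 1 := by rw [norm_mul]; ring
      _ ≤ 2 := by nlinarith [norm_nonneg (cfDen a (n + 1) * cfErr a z n)]

theorem cfDen_succ_ne_zero (h : IsCFExpansion z a zs) (hρ : ∀ n, ‖zs n - a n‖ ≤ ρ)
    (hρ2 : 2 * ρ ^ 2 < 1) (n : ℕ) : cfDen a (n + 1) ≠ 0 := by
  rcases n with _ | n
  · simp [cfDen]
  intro h0
  have hdet := cfDen_mul_cfErr_sub a z (n + 1)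
  rw [h0, zero_mul, sub_zero] at hdet
  have hone : ‖cfDen a (n + 1)‖ * ‖cfErr a z (n + 2)‖ = 1 := by simpa using congrArg norm hdet
  have := h.norm_cfDen_mul_cfErr_le_two hρ hρ2.le n
  rw [norm_mul] at this
  nlinarith [h.norm_cfErr_add_two_le hρ n, norm_nonneg (cfDen a (n + 1)), norm_nonneg (cfErr a z n)]

end Normed

end IsCFExpansion

section Approximation

variable {K : Type*} [NormedField K]

def IsBadlyApprox (S : Subring K) (z : K) : Prop :=
  ∃ δ : ℝ, 0 < δ ∧ ∀ p q : K, p ∈ S → q ∈ S → q ≠ 0 → δ / ‖q‖ ^ 2 ≤ ‖z - p / q‖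

theorem div_norm_sq_le_norm_sub_div_iff {δ : ℝ} {z p q : K} (hq : q ≠ 0) :
    δ / ‖q‖ ^ 2 ≤ ‖z - p / q‖ ↔ δ ≤ ‖q‖ * ‖q * z - p‖ := by
  have hq' : 0 < ‖q‖ := norm_pos_iff.2 hq
  rw [show z - p / q = (q * z - p) / q by field_simp, norm_div,
    div_le_div_iff₀ (by positivity) hq']
  constructor <;> intro h <;> nlinarith

/-- Then `q z - p = ± v E_{n+1}` with `v = q_n p - q p_n` a nonzero element of `S`. -/
theorem norm_cfErr_le_of_cfDen_mul_eq {S : Subring K} (hS : ∀ x ∈ S, x ≠ 0 → 1 ≤ ‖x‖)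
    {a : ℕ → K} (ha : ∀ n, a n ∈ S) (z : K) {p q : K} (hp : p ∈ S) (hq : q ∈ S) (hq0 : q ≠ 0)
    {n : ℕ} (heq : cfDen a (n + 1) * p = q * cfNum a (n + 1)) :
    ‖cfErr a z (n + 1)‖ ≤ ‖q * z - p‖ := by
  set v := cfDen a n * p - q * cfNum a n
  have hvS : v ∈ S :=
    S.sub_mem (S.mul_mem (cfDen_mem ha n) hp) (S.mul_mem hq (cfNum_mem ha n))
  have hdetQ : v * cfDen a (n + 1) = -q * (-1) ^ n := by
    linear_combination cfDen a n * heq - q * cfDen_mul_cfNum_sub a n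
  have hdetE : v * cfErr a z (n + 1) = -(q * z - p) * (-1) ^ n := by
    simp only [cfErr, v]
    linear_combination (cfDen a n * z - cfNum a n) * heq - (q * z - p) * cfDen_mul_cfNum_sub a n
  have hv0 : v ≠ 0 := by
    rintro hv
    simp [hv, hq0] at hdetQ
  calc ‖cfErr a z (n + 1)‖ ≤ ‖v‖ * ‖cfErr a z (n + 1)‖ :=
        le_mul_of_one_le_left (norm_nonneg _) (hS v hvS hv0)
    _ = ‖q * z - p‖ := by simpa [norm_sub_rev] using congrArg norm hdetE

end Approximation

namespace IsCFExpansion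

variable {K : Type*} [NormedField K] {S : Subring K} {z : K} {a zs : ℕ → K} {ρ : ℝ}

theorem exists_cfDen_cfErr_bounds_at_scale (h : IsCFExpansion z a zs) (hρ : ∀ n, ‖zs n - a n‖ ≤ ρ)
    (hρ2 : 2 * ρ ^ 2 < 1) {B : ℝ} (hB1 : 1 ≤ B) (hB : ∀ n, ‖zs (n + 1)‖ ≤ B) {r : ℝ}
    (hr : 1 ≤ r) : ∃ n, r * ‖cfErr a z (n + 2)‖ < 1 / 2 ∧ ‖cfDen a (n + 2)‖ ≤ 4 * B * r ∧
      1 ≤ 2 * B ^ 2 * r * ‖cfErr a z (n + 2)‖ := by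
  have hρ0 : 0 ≤ ρ := (norm_nonneg _).trans (hρ 0)
  have hρ1 : ρ < 1 := by nlinarith
  have hEB (m : ℕ) : ‖cfErr a z m‖ ≤ B * ‖cfErr a z (m + 1)‖ := by
    rw [h.norm_cfErr_eq m]; gcongr; exact hB m
  obtain ⟨n, hn1, hn0⟩ := h.exists_norm_cfErr_succ_lt_le hρ hρ1 (t := 1 / (2 * r))
    (by positivity) (by rw [div_le_one (by positivity)]; linarith)
  rw [div_le_iff₀ (by positivity)] at hn0
  rw [lt_div_iff₀ (by positivity)] at hn1
  have hE1 : 1 ≤ 2 * B * r * ‖cfErr a z (n + 1)‖ := by nlinarith [hEB n]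
  refine ⟨n, ?_, ?_, ?_⟩
  · nlinarith [h.norm_cfErr_succ_le hρ (n + 1), norm_nonneg (cfErr a z (n + 1))]
  · have h2 := h.norm_cfDen_mul_cfErr_le_two hρ hρ2.le (n + 1)
    rw [norm_mul] at h2
    calc ‖cfDen a (n + 2)‖ ≤ ‖cfDen a (n + 2)‖ * (2 * B * r * ‖cfErr a z (n + 1)‖) :=
          le_mul_of_one_le_right (norm_nonneg _) hE1
      _ = 2 * B * r * (‖cfDen a (n + 2)‖ * ‖cfErr a z (n + 1)‖) := by ring
      _ ≤ 2 * B * r * 2 := by gcongr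
      _ = 4 * B * r := by ring
  · calc 1 ≤ 2 * B * r * ‖cfErr a z (n + 1)‖ := hE1
      _ ≤ 2 * B * r * (B * ‖cfErr a z (n + 2)‖) :=
        mul_le_mul_of_nonneg_left (hEB (n + 1)) (by nlinarith)
      _ = 2 * B ^ 2 * r * ‖cfErr a z (n + 2)‖ := by ring

theorem le_norm_mul_norm_sub (h : IsCFExpansion z a zs) (hS : ∀ x ∈ S, x ≠ 0 → 1 ≤ ‖x‖)
    (ha : ∀ n, a n ∈ S) (hρ : ∀ n, ‖zs n - a n‖ ≤ ρ) (hρ2 : 2 * ρ ^ 2 < 1) {B : ℝ}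
    (hB1 : 1 ≤ B) (hB : ∀ n, ‖zs (n + 1)‖ ≤ B) {p q : K} (hp : p ∈ S) (hq : q ∈ S)
    (hq0 : q ≠ 0) : 1 / (8 * B ^ 2) ≤ ‖q‖ * ‖q * z - p‖ := by
  obtain ⟨n, hsmall, hden, hE2⟩ := h.exists_cfDen_cfErr_bounds_at_scale hρ hρ2 hB1 hB (hS q hq hq0)
  have hnonneg : 0 ≤ ‖q‖ * ‖q * z - p‖ := by positivity
  rw [div_le_iff₀ (by positivity)]
  by_cases hconv : cfDen a (n + 2) * p = q * cfNum a (n + 2)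
  · have hF := norm_cfErr_le_of_cfDen_mul_eq hS ha z hp hq hq0 hconv
    calc 1 ≤ 2 * B ^ 2 * ‖q‖ * ‖cfErr a z (n + 2)‖ := hE2
      _ ≤ 2 * B ^ 2 * ‖q‖ * ‖q * z - p‖ := by gcongr
      _ ≤ ‖q‖ * ‖q * z - p‖ * (8 * B ^ 2) := by nlinarith [mul_nonneg hnonneg (sq_nonneg B)]
  · have hu : (1 : ℝ) ≤ ‖q‖ * ‖cfErr a z (n + 2)‖ + ‖cfDen a (n + 2)‖ * ‖q * z - p‖ := by
      have huS : cfDen a (n + 2) * p - q * cfNum a (n + 2) ∈ S :=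
        S.sub_mem (S.mul_mem (cfDen_mem ha _) hp) (S.mul_mem hq (cfNum_mem ha _))
      calc (1 : ℝ) ≤ ‖cfDen a (n + 2) * p - q * cfNum a (n + 2)‖ :=
            hS _ huS (sub_ne_zero.2 hconv)
        _ = ‖q * cfErr a z (n + 2) - cfDen a (n + 2) * (q * z - p)‖ := by
          congr 1; simp only [cfErr]; ring
        _ ≤ _ := (norm_sub_le _ _).trans_eq (by rw [norm_mul, norm_mul])
    have hF : 1 ≤ 8 * B * (‖q‖ * ‖q * z - p‖) := by
      nlinarith [mul_le_mul_of_nonneg_right hden (norm_nonneg (q * z - p))]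
    nlinarith [mul_nonneg hnonneg (zero_le_one.trans hB1)]

theorem exists_norm_le_of_isBadlyApprox (h : IsCFExpansion z a zs) (ha : ∀ n, a n ∈ S)
    (hρ : ∀ n, ‖zs n - a n‖ ≤ ρ) (hρ2 : 2 * ρ ^ 2 < 1) (hz : IsBadlyApprox S z) :
    ∃ C : ℝ, ∀ n, ‖a n‖ ≤ C := by
  obtain ⟨δ, hδ, hba⟩ := hz
  have hρ1 : ρ ≤ 1 := by nlinarith [(norm_nonneg _).trans (hρ 0)]
  have hzs (n : ℕ) : ‖zs (n + 1)‖ ≤ 2 / δ := by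
    have hQ := h.cfDen_succ_ne_zero hρ hρ2 n
    have happ : δ ≤ ‖cfDen a (n + 1)‖ * ‖cfErr a z (n + 1)‖ :=
      (div_norm_sq_le_norm_sub_div_iff hQ).1 (hba _ _ (cfNum_mem ha _) (cfDen_mem ha _) hQ)
    rw [le_div_iff₀ hδ]
    calc ‖zs (n + 1)‖ * δ ≤ ‖zs (n + 1)‖ * (‖cfDen a (n + 1)‖ * ‖cfErr a z (n + 1)‖) := by
          gcongr
      _ = ‖cfDen a (n + 1) * cfErr a z n‖ := by rw [norm_mul, h.norm_cfErr_eq n]; ring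
      _ ≤ 2 := h.norm_cfDen_mul_cfErr_le_two hρ hρ2.le n
  refine ⟨max (2 / δ + 1) ‖a 0‖, ?_⟩
  rintro (_ | n)
  · exact le_max_right _ _
  · calc ‖a (n + 1)‖ ≤ ‖zs (n + 1)‖ + ‖zs (n + 1) - a (n + 1)‖ := norm_le_norm_add_norm_sub _ _
      _ ≤ 2 / δ + 1 := add_le_add (hzs n) ((hρ _).trans hρ1)
      _ ≤ _ := le_max_left _ _

theorem isBadlyApprox_of_norm_le (h : IsCFExpansion z a zs) (hS : ∀ x ∈ S, x ≠ 0 → 1 ≤ ‖x‖)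
    (ha : ∀ n, a n ∈ S) (hρ : ∀ n, ‖zs n - a n‖ ≤ ρ) (hρ2 : 2 * ρ ^ 2 < 1) {C : ℝ}
    (hC : ∀ n, ‖a n‖ ≤ C) : IsBadlyApprox S z := by
  have hρ1 : ρ ≤ 1 := by nlinarith [(norm_nonneg _).trans (hρ 0)]
  have hB (n : ℕ) : ‖zs (n + 1)‖ ≤ C + 1 :=
    calc ‖zs (n + 1)‖ ≤ ‖a (n + 1)‖ + ‖zs (n + 1) - a (n + 1)‖ := norm_le_norm_add_norm_sub' _ _
      _ ≤ C + 1 := add_le_add (hC _) ((hρ _).trans hρ1)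
  have hB1 : 1 ≤ C + 1 := by linarith [(norm_nonneg _).trans (hC 0)]
  refine ⟨1 / (8 * (C + 1) ^ 2), by positivity, fun p q hp hq hq0 => ?_⟩
  exact (div_norm_sq_le_norm_sub_div_iff hq0).2
    (h.le_norm_mul_norm_sub hS ha hρ hρ2 hB1 hB hp hq hq0)

theorem isBadlyApprox_iff (h : IsCFExpansion z a zs) (hS : ∀ x ∈ S, x ≠ 0 → 1 ≤ ‖x‖)
    (ha : ∀ n, a n ∈ S) (hρ : ∀ n, ‖zs n - a n‖ ≤ ρ) (hρ2 : 2 * ρ ^ 2 < 1) :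
    IsBadlyApprox S z ↔ ∃ C : ℝ, ∀ n, ‖a n‖ ≤ C :=
  ⟨h.exists_norm_le_of_isBadlyApprox ha hρ hρ2,
    fun ⟨_, hC⟩ => h.isBadlyApprox_of_norm_le hS ha hρ hρ2 hC⟩

end IsCFExpansion

theorem eisOmega_re : eisOmega.re = -1 / 2 := by simp [eisOmega]

theorem eisOmega_im : eisOmega.im = √3 / 2 := by simp [eisOmega]

theorem eisOmega_sq : eisOmega ^ 2 = -1 - eisOmega := by
  have h3 : ((√3 : ℝ) : ℂ) ^ 2 = 3 := by
    rw [← Complex.ofReal_pow, Real.sq_sqrt (by norm_num)]; norm_num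
  simp only [eisOmega]
  linear_combination (Complex.I ^ 2 / 4) * h3 + (3 / 4) * Complex.I_sq

def eisensteinSubring : Subring ℂ where
  carrier := {u | IsEis u}
  mul_mem' := by
    rintro _ _ ⟨x, y, rfl⟩ ⟨x', y', rfl⟩
    exact ⟨x * x' - y * y', x * y' + y * x' - y * y', by
      push_cast; linear_combination (y : ℂ) * y' * eisOmega_sq⟩
  one_mem' := ⟨1, 0, by simp⟩
  add_mem' := by
    rintro _ _ ⟨x, y, rfl⟩ ⟨x', y', rfl⟩
    exact ⟨x + x', y + y', by push_cast; ring⟩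
  zero_mem' := ⟨0, 0, by simp⟩
  neg_mem' := by
    rintro _ ⟨x, y, rfl⟩
    exact ⟨-x, -y, by push_cast; ring⟩

theorem normSq_intCast_add_intCast_mul_eisOmega (x y : ℤ) :
    normSq (x + y * eisOmega) = ((x ^ 2 - x * y + y ^ 2 : ℤ) : ℝ) := by
  have h3 : √3 ^ 2 = 3 := Real.sq_sqrt (by norm_num)
  simp only [normSq_apply, add_re, add_im, mul_re, mul_im, intCast_re, intCast_im,
    eisOmega_re, eisOmega_im]
  push_cast
  linear_combination (y : ℝ) ^ 2 / 4 * h3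

theorem IsEis.one_le_norm {u : ℂ} (hu : IsEis u) (h0 : u ≠ 0) : 1 ≤ ‖u‖ := by
  obtain ⟨x, y, rfl⟩ := hu
  have hpos : (0 : ℝ) < ((x ^ 2 - x * y + y ^ 2 : ℤ) : ℝ) := by
    rw [← normSq_intCast_add_intCast_mul_eisOmega]; exact normSq_pos.2 h0
  have hone : (1 : ℝ) ≤ ((x ^ 2 - x * y + y ^ 2 : ℤ) : ℝ) := by exact_mod_cast hpos
  rw [← normSq_intCast_add_intCast_mul_eisOmega, ← Complex.sq_norm] at hone
  nlinarith [norm_nonneg ((x : ℂ) + y * eisOmega)]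

/-- Round the `ω`-coordinate first, then the `1`-coordinate; the squared error is at most
`1/4 + 3/16 = 7/16 < 4/9`. -/
theorem exists_isEis_norm_sub_le (w : ℂ) : ∃ b, IsEis b ∧ ‖w - b‖ ≤ 2 / 3 := by
  have h3 : √3 ^ 2 = 3 := Real.sq_sqrt (by norm_num)
  set y := round (2 * w.im / √3)
  set x := round (w.re + y / 2)
  refine ⟨x + y * eisOmega, ⟨x, y, rfl⟩, ?_⟩
  have hre : (w - (x + y * eisOmega)).re = w.re + y / 2 - x := by
    simp only [sub_re, add_re, mul_re, intCast_re, intCast_im, eisOmega_re, eisOmega_im]; ring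
  have him : (w - (x + y * eisOmega)).im = √3 / 2 * (2 * w.im / √3 - y) := by
    simp only [sub_im, add_im, mul_im, intCast_re, intCast_im, eisOmega_re, eisOmega_im]
    field_simp; ring
  obtain ⟨hx₁, hx₂⟩ := abs_le.1 (abs_sub_round (w.re + y / 2))
  obtain ⟨hy₁, hy₂⟩ := abs_le.1 (abs_sub_round (2 * w.im / √3))
  have hsq : ‖w - (x + y * eisOmega)‖ ^ 2 ≤ (2 / 3) ^ 2 := by
    rw [Complex.sq_norm, normSq_apply, hre, him]
    linear_combination
      sq_le_sq' hx₁ hx₂ + 3 / 4 * sq_le_sq' hy₁ hy₂ + (2 * w.im / √3 - y) ^ 2 / 4 * h3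
  exact (pow_le_pow_iff_left₀ (norm_nonneg _) (by norm_num) two_ne_zero).1 hsq

theorem eisenstein_cf_badly_approximable_iff_general
    (z : ℂ) (a zs : ℕ → ℂ)
    (ha : ∀ n, IsEis (a n))
    (hz0 : zs 0 = z)
    (hnear : ∀ n, ∀ b : ℂ, IsEis b → ‖zs n - a n‖ ≤ ‖zs n - b‖)
    (hne : ∀ n, zs n ≠ a n)
    (hit : ∀ n, zs (n + 1) = (zs n - a n)⁻¹)
    :
    (∃ δ : ℝ, 0 < δ ∧ ∀ pp qq : ℂ, IsEis pp → IsEis qq → qq ≠ 0 →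
        δ / ‖qq‖ ^ 2 ≤ ‖z - pp / qq‖)
      ↔ (∃ C : ℝ, ∀ n : ℕ, ‖a n‖ ≤ C) := by
  have hρ (n : ℕ) : ‖zs n - a n‖ ≤ 2 / 3 := by
    obtain ⟨b, hb, hwb⟩ := exists_isEis_norm_sub_le (zs n)
    exact (hnear n b hb).trans hwb
  exact IsCFExpansion.isBadlyApprox_iff (S := eisensteinSubring) ⟨hz0, hne, hit⟩
    (fun _ => IsEis.one_le_norm) ha hρ (by norm_num)

/-- z (not in the quotient field ℚ(ω)) is badly approximable with respect to the
Eisenstein integers iff the sequence of absolute values of its partial quotients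
is bounded. -/
theorem eisenstein_cf_badly_approximable_iff
    (z : ℂ) (a zs : ℕ → ℂ)
    (ha : ∀ n, IsEis (a n))
    (hz0 : zs 0 = z)
    (hnear : ∀ n, ∀ b : ℂ, IsEis b → ‖zs n - a n‖ ≤ ‖zs n - b‖)
    (hne : ∀ n, zs n ≠ a n)
    (hit : ∀ n, zs (n + 1) = (zs n - a n)⁻¹)
    (hirr : ¬ ∃ x y : ℚ, z = (x : ℂ) + (y : ℂ) * eisOmega)
    :
    (∃ δ : ℝ, 0 < δ ∧ ∀ pp qq : ℂ, IsEis pp → IsEis qq → qq ≠ 0 →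
        δ / ‖qq‖ ^ 2 ≤ ‖z - pp / qq‖)
      ↔ (∃ C : ℝ, ∀ n : ℕ, ‖a n‖ ≤ C) :=
  eisenstein_cf_badly_approximable_iff_general z a zs ha hz0 hnear hne hit
end

section
/- Let z ∈ ℂ and let {a_n}, {z_n} be an infinite continued fraction expansion and iteration sequence of z over the Eisenstein integers 𝔈 with respect to a nearest integer algorithm, with Q-pair {p_n}, {q_n}. Then for all n ≥ 1, |q_{n+1}| ≥ (3/2)·|q_{n−1}|. -/
/-!
The Eisenstein lattice has covering radius `1/√3`, so every remainder `xₙ = zₙ - aₙ` has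
`|xₙ| ≤ 1/√3`, hence `|zₙ₊₁| = |xₙ|⁻¹ ≥ √3`. Then `|aₙ₊₁| ≥ √3 - 1/√3 > 1`, and since the norm
form `x² - xy + y²` never takes the value `2`, in fact `|aₙ₊₁| ≥ √3`.

With `Dₙ = qₙ zₙ₊₁ + qₙ₋₁` one has `Dₙ₊₁ = zₙ₊₂ Dₙ`, `qₙ₊₁ = Dₙ - qₙ xₙ₊₁` and
`qₙ₊₂ = aₙ₊₂ Dₙ + qₙ xₙ₊₁ xₙ₊₂`. The first two give `|qₙ| ≤ (√3/2)|Dₙ|` by induction, and the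
third then gives `|qₙ₊₂| ≥ √3 |Dₙ| - |qₙ|/3 ≥ (5/3)|qₙ|`.
-/

open Complex

theorem normSq_add_mul_eisOmega (u v : ℝ) :
    normSq (u + v * eisOmega) = u ^ 2 - u * v + v ^ 2 := by
  have h3 : Real.sqrt 3 ^ 2 = 3 := Real.sq_sqrt (by norm_num)
  simp [normSq_apply, eisOmega]
  linear_combination (v ^ 2 / 4) * h3

theorem exists_eq_add_mul_eisOmega (w : ℂ) : ∃ u v : ℝ, w = u + v * eisOmega := by
  have hs : Real.sqrt 3 ≠ 0 := by positivity
  refine ⟨w.re + w.im / Real.sqrt 3, 2 * w.im / Real.sqrt 3, ?_⟩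
  apply Complex.ext
  · simp [eisOmega]
    field_simp
    ring
  · simp [eisOmega]
    field_simp

-- Weighted by the barycentric coordinates of `(f, t)` in the triangle `(0,0), (1,0), (1,1)`, the
-- three squared distances sum to `1/3` minus the squared distance to the centroid.
theorem exists_int_eisenstein_form_sub_le_of_le {f t : ℝ} (ht0 : 0 ≤ t) (htf : t ≤ f)
    (hf1 : f ≤ 1) : ∃ i j : ℤ, (f - i) ^ 2 - (f - i) * (t - j) + (t - j) ^ 2 ≤ 1 / 3 := by
  by_contra! h
  have h00 := h 0 0
  have h10 := h 1 0
  have h11 := h 1 1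
  push_cast at h00 h10 h11
  nlinarith [mul_nonneg ht0 (sub_nonneg.2 htf), mul_nonneg (sub_nonneg.2 htf) (sub_nonneg.2 hf1),
    mul_nonneg ht0 (sub_nonneg.2 hf1)]

theorem exists_int_eisenstein_form_sub_le (u v : ℝ) :
    ∃ x y : ℤ, (u - x) ^ 2 - (u - x) * (v - y) + (v - y) ^ 2 ≤ 1 / 3 := by
  rcases le_total (Int.fract v) (Int.fract u) with hvu | huv
  · obtain ⟨i, j, h⟩ := exists_int_eisenstein_form_sub_le_of_le (Int.fract_nonneg v) hvu
      (Int.fract_lt_one u).le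
    refine ⟨⌊u⌋ + i, ⌊v⌋ + j, ?_⟩
    simp only [Int.fract] at h
    push_cast
    linear_combination h
  · obtain ⟨j, i, h⟩ := exists_int_eisenstein_form_sub_le_of_le (Int.fract_nonneg u) huv
      (Int.fract_lt_one v).le
    refine ⟨⌊u⌋ + i, ⌊v⌋ + j, ?_⟩
    simp only [Int.fract] at h
    push_cast
    linear_combination h

theorem exists_isEis_normSq_sub_le (w : ℂ) : ∃ b, IsEis b ∧ normSq (w - b) ≤ 1 / 3 := by
  obtain ⟨u, v, rfl⟩ := exists_eq_add_mul_eisOmega w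
  obtain ⟨x, y, hxy⟩ := exists_int_eisenstein_form_sub_le u v
  refine ⟨x + y * eisOmega, ⟨x, y, rfl⟩, ?_⟩
  have hsub : (u : ℂ) + v * eisOmega - (x + y * eisOmega)
      = ((u - x : ℝ) : ℂ) + ((v - y : ℝ) : ℂ) * eisOmega := by
    push_cast
    ring
  rwa [hsub, normSq_add_mul_eisOmega]

theorem norm_sub_le_of_isEis_nearest {w a : ℂ} (hnear : ∀ b, IsEis b → ‖w - a‖ ≤ ‖w - b‖) :
    ‖w - a‖ ≤ (√3)⁻¹ := by
  obtain ⟨b, hb, hwb⟩ := exists_isEis_normSq_sub_le w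
  refine (hnear b hb).trans ?_
  rw [norm_def, ← Real.sqrt_inv]
  exact Real.sqrt_le_sqrt (by simpa using hwb)

theorem eisenstein_form_ne_two (x y : ℤ) : x ^ 2 - x * y + y ^ 2 ≠ 2 := by
  intro h
  have h4 := congrArg (fun k : ℤ => (k : ZMod 4)) h
  push_cast at h4
  revert h4
  generalize (x : ZMod 4) = u
  generalize (y : ZMod 4) = w
  revert u w
  decide

theorem IsEis.three_le_normSq {b : ℂ} (hb : IsEis b) (h : 1 < normSq b) : 3 ≤ normSq b := by
  obtain ⟨x, y, rfl⟩ := hb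
  have hN := normSq_add_mul_eisOmega x y
  push_cast at hN
  rw [hN] at h ⊢
  have h1 : 1 < x ^ 2 - x * y + y ^ 2 := by exact_mod_cast h
  have := eisenstein_form_ne_two x y
  exact_mod_cast (show 3 ≤ x ^ 2 - x * y + y ^ 2 by omega)

theorem sqrt_three_le_norm_of_isEis_nearest {w a : ℂ} (ha : IsEis a)
    (hnear : ∀ b, IsEis b → ‖w - a‖ ≤ ‖w - b‖) (hw : √3 ≤ ‖w‖) : √3 ≤ ‖a‖ := by
  have hs : 3 / 2 < √3 := (Real.lt_sqrt (by norm_num)).2 (by norm_num)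
  have hinv : (√3)⁻¹ = √3 / 3 := by rw [inv_eq_iff_eq_inv, inv_div, Real.div_sqrt]
  have h1 : 1 < ‖a‖ := by
    have hwa := norm_sub_le_of_isEis_nearest hnear
    have := norm_sub_norm_le w (w - a)
    rw [sub_sub_cancel] at this
    linarith
  have h3 := ha.three_le_normSq (by rw [normSq_eq_norm_sq]; nlinarith)
  rw [norm_def]
  exact Real.sqrt_le_sqrt h3

section ContinuedFraction

variable {K : Type*} [Field K] {z a q : ℕ → K}

-- The denominator of `(pₙ zₙ₊₁ + pₙ₋₁) / (qₙ zₙ₊₁ + qₙ₋₁) = z₀`, shifted as `q (n + 1) = qₙ`.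
def completeDenom (q z : ℕ → K) (n : ℕ) : K := q (n + 1) * z (n + 1) + q n

theorem completeDenom_succ (hinv : ∀ n, z (n + 1) * (z n - a n) = 1)
    (hqrec : ∀ n, q (n + 2) = a (n + 1) * q (n + 1) + q n) (n : ℕ) :
    completeDenom q z (n + 1) = z (n + 2) * completeDenom q z n := by
  simp only [completeDenom, hqrec n]
  linear_combination (-q (n + 1)) * hinv (n + 1)

theorem q_add_two_eq (hqrec : ∀ n, q (n + 2) = a (n + 1) * q (n + 1) + q n) (n : ℕ) :
    q (n + 2) = completeDenom q z n - q (n + 1) * (z (n + 1) - a (n + 1)) := by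
  rw [completeDenom, hqrec n]
  ring

theorem q_add_three_eq (hinv : ∀ n, z (n + 1) * (z n - a n) = 1)
    (hqrec : ∀ n, q (n + 2) = a (n + 1) * q (n + 1) + q n) (n : ℕ) :
    q (n + 3) = a (n + 2) * completeDenom q z n
      + q (n + 1) * ((z (n + 1) - a (n + 1)) * (z (n + 2) - a (n + 2))) := by
  rw [hqrec (n + 1), q_add_two_eq (z := z) hqrec n]
  linear_combination (-q (n + 1)) * hinv (n + 1)

end ContinuedFraction

section NormEstimates

variable {K : Type*} [NormedField K] {z a q : ℕ → K}

theorem sqrt_three_le_norm_succ (hinv : ∀ n, z (n + 1) * (z n - a n) = 1)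
    (hx : ∀ n, ‖z n - a n‖ ≤ (√3)⁻¹) (n : ℕ) : √3 ≤ ‖z (n + 1)‖ := by
  have h := congrArg norm (hinv n)
  rw [norm_mul, norm_one] at h
  have hpos : 0 < ‖z n - a n‖ := (norm_nonneg _).lt_of_ne' (right_ne_zero_of_mul_eq_one h)
  rw [eq_inv_of_mul_eq_one_left h]
  exact (le_inv_comm₀ (by positivity) hpos).2 (hx n)

theorem norm_q_succ_le (hinv : ∀ n, z (n + 1) * (z n - a n) = 1)
    (hqrec : ∀ n, q (n + 2) = a (n + 1) * q (n + 1) + q n) (hq0 : q 0 = 0) (hq1 : q 1 = 1)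
    (hx : ∀ n, ‖z n - a n‖ ≤ (√3)⁻¹) (n : ℕ) :
    ‖q (n + 1)‖ ≤ √3 / 2 * ‖completeDenom q z n‖ := by
  have hs : √3 * √3 = 3 := Real.mul_self_sqrt (by norm_num)
  have hs0 : 0 < √3 := by positivity
  induction n with
  | zero =>
    have hz := sqrt_three_le_norm_succ hinv hx 0
    simp only [completeDenom, hq0, hq1, one_mul, add_zero, norm_one]
    nlinarith
  | succ n ih =>
    calc ‖q (n + 2)‖
        ≤ ‖completeDenom q z n‖ + ‖q (n + 1)‖ * ‖z (n + 1) - a (n + 1)‖ := by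
          rw [q_add_two_eq hqrec n, ← norm_mul]
          exact norm_sub_le _ _
      _ ≤ ‖completeDenom q z n‖ + √3 / 2 * ‖completeDenom q z n‖ * (√3)⁻¹ := by
          gcongr
          exact hx _
      _ = √3 / 2 * (√3 * ‖completeDenom q z n‖) := by
          field_simp
          rw [Real.sq_sqrt (by norm_num)]
          ring
      _ ≤ √3 / 2 * ‖completeDenom q z (n + 1)‖ := by
          rw [completeDenom_succ hinv hqrec, norm_mul]
          gcongr
          exact sqrt_three_le_norm_succ hinv hx _

theorem five_thirds_mul_norm_q_le (hinv : ∀ n, z (n + 1) * (z n - a n) = 1)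
    (hqrec : ∀ n, q (n + 2) = a (n + 1) * q (n + 1) + q n) (hq0 : q 0 = 0) (hq1 : q 1 = 1)
    (hx : ∀ n, ‖z n - a n‖ ≤ (√3)⁻¹) (ha : ∀ n, √3 ≤ ‖a (n + 1)‖) (n : ℕ) :
    5 / 3 * ‖q (n + 1)‖ ≤ ‖q (n + 3)‖ := by
  have hq := norm_q_succ_le hinv hqrec hq0 hq1 hx n
  have hs : (√3)⁻¹ * (√3)⁻¹ = 1 / 3 := by
    rw [← mul_inv, Real.mul_self_sqrt (by norm_num), one_div]
  calc 5 / 3 * ‖q (n + 1)‖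
      ≤ √3 * ‖completeDenom q z n‖ - ‖q (n + 1)‖ * ((√3)⁻¹ * (√3)⁻¹) := by
        rw [hs]
        linarith
    _ ≤ ‖a (n + 2)‖ * ‖completeDenom q z n‖
          - ‖q (n + 1)‖ * (‖z (n + 1) - a (n + 1)‖ * ‖z (n + 2) - a (n + 2)‖) := by
        gcongr
        · exact ha _
        · exact hx _
        · exact hx _
    _ ≤ ‖q (n + 3)‖ := by
        rw [q_add_three_eq hinv hqrec n, ← norm_mul, ← norm_mul, ← norm_mul]
        exact norm_sub_le_norm_add _ _

end NormEstimates

-- `q (n + 1)` is the paper's `qₙ`: the conclusion reads `|qₙ₊₁| ≥ (3/2)|qₙ₋₁|`.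
theorem eisenstein_cf_ratio_growth_general
    (a zs : ℕ → ℂ)
    (ha : ∀ n, IsEis (a n))
    (hnear : ∀ n, ∀ b : ℂ, IsEis b → ‖zs n - a n‖ ≤ ‖zs n - b‖)
    (hne : ∀ n, zs n ≠ a n)
    (hit : ∀ n, zs (n + 1) = (zs n - a n)⁻¹)
    (q : ℕ → ℂ)
    (hq0 : q 0 = 0) (hq1 : q 1 = 1)
    (hqrec : ∀ n, q (n + 2) = a (n + 1) * q (n + 1) + q n)
    :
    ∀ n : ℕ, 1 ≤ n → (3 / 2) * ‖q n‖ ≤ ‖q (n + 2)‖ := by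
  have hinv : ∀ n, zs (n + 1) * (zs n - a n) = 1 := fun n => by
    rw [hit n, inv_mul_cancel₀ (sub_ne_zero.2 (hne n))]
  have hx : ∀ n, ‖zs n - a n‖ ≤ (√3)⁻¹ := fun n => norm_sub_le_of_isEis_nearest (hnear n)
  have ha' : ∀ n, √3 ≤ ‖a (n + 1)‖ := fun n =>
    sqrt_three_le_norm_of_isEis_nearest (ha (n + 1)) (hnear (n + 1))
      (sqrt_three_le_norm_succ hinv hx n)
  intro n hn
  obtain ⟨m, rfl⟩ := Nat.exists_eq_add_of_le' hn
  have h := five_thirds_mul_norm_q_le hinv hqrec hq0 hq1 hx ha' m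
  linarith [norm_nonneg (q (m + 1))]

/-- For all n ≥ 1, |q_{n+1}| ≥ (3/2)·|q_{n−1}|.
(Here `q (n+1)` denotes qₙ, so q_{n+1} is `q (n+2)` and q_{n−1} is `q n`.) -/
theorem eisenstein_cf_ratio_growth
    (z : ℂ) (a zs : ℕ → ℂ)
    (ha : ∀ n, IsEis (a n))
    (hz0 : zs 0 = z)
    (hnear : ∀ n, ∀ b : ℂ, IsEis b → ‖zs n - a n‖ ≤ ‖zs n - b‖)
    (hne : ∀ n, zs n ≠ a n)
    (hit : ∀ n, zs (n + 1) = (zs n - a n)⁻¹)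
    (p q : ℕ → ℂ)
    (hp0 : p 0 = 1) (hp1 : p 1 = a 0)
    (hprec : ∀ n, p (n + 2) = a (n + 1) * p (n + 1) + p n)
    (hq0 : q 0 = 0) (hq1 : q 1 = 1)
    (hqrec : ∀ n, q (n + 2) = a (n + 1) * q (n + 1) + q n)
    (hqne : ∀ n, q (n + 1) ≠ 0)
    :
    ∀ n : ℕ, 1 ≤ n → (3 / 2) * ‖q n‖ ≤ ‖q (n + 2)‖ :=
  eisenstein_cf_ratio_growth_general a zs ha hnear hne hit q hq0 hq1 hqrec
end

section
/- Let z ∈ ℂ and let {a_n}, {z_n} be an infinite continued fraction expansion and iteration sequence of z over the Eisenstein integers 𝔈 with respect to a nearest integer algorithm, with Q-pair {p_n}, {q_n}. Let n ≥ 0, let α, β ∈ ℂ, and set p = α·p_n + β·p_{n−1} and q = α·q_n + β·q_{n−1}. If q ≠ 0, then |q·z − p| = |β·z_{n+1} − α| · |q_n·z − p_n|. -/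
open Complex

/-!
Write `eₙ = qₙ z − pₙ` for the error of the `n`-th convergent. Since `z_{n+1} (z_n − a_n) = 1`
and both `p` and `q` satisfy the recurrence of the partial quotients, induction gives
`z_{n+1} eₙ = −e_{n−1}`. Hence `α eₙ + β e_{n−1} = −(β z_{n+1} − α) eₙ`, and taking norms
yields the factorization.
-/

section ContinuedFractionError

variable {K : Type*} [Field K] {z : K} {a zs p q : ℕ → K}

theorem cf_error_add_two (hprec : ∀ n, p (n + 2) = a (n + 1) * p (n + 1) + p n)
    (hqrec : ∀ n, q (n + 2) = a (n + 1) * q (n + 1) + q n) (n : ℕ) :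
    q (n + 2) * z - p (n + 2) =
      a (n + 1) * (q (n + 1) * z - p (n + 1)) + (q n * z - p n) := by
  rw [hprec, hqrec]; ring

theorem iterate_succ_mul_cf_error (hz0 : zs 0 = z)
    (hit : ∀ n, zs (n + 1) * (zs n - a n) = 1)
    (hp0 : p 0 = 1) (hp1 : p 1 = a 0)
    (hprec : ∀ n, p (n + 2) = a (n + 1) * p (n + 1) + p n)
    (hq0 : q 0 = 0) (hq1 : q 1 = 1)
    (hqrec : ∀ n, q (n + 2) = a (n + 1) * q (n + 1) + q n) :
    ∀ n, zs (n + 1) * (q (n + 1) * z - p (n + 1)) = -(q n * z - p n) := by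
  intro n
  induction n with
  | zero =>
    have h := hit 0
    rw [hz0] at h
    rw [hp0, hp1, hq0, hq1]
    linear_combination h
  | succ n ih =>
    rw [cf_error_add_two hprec hqrec]
    linear_combination zs (n + 2) * ih - (q (n + 1) * z - p (n + 1)) * hit (n + 1)

theorem cf_error_linear_combination (hz0 : zs 0 = z)
    (hit : ∀ n, zs (n + 1) * (zs n - a n) = 1) (hp0 : p 0 = 1) (hp1 : p 1 = a 0)
    (hprec : ∀ n, p (n + 2) = a (n + 1) * p (n + 1) + p n)
    (hq0 : q 0 = 0) (hq1 : q 1 = 1)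
    (hqrec : ∀ n, q (n + 2) = a (n + 1) * q (n + 1) + q n) (n : ℕ) (α β : K) :
    (α * q (n + 1) + β * q n) * z - (α * p (n + 1) + β * p n) =
      -((β * zs (n + 1) - α) * (q (n + 1) * z - p (n + 1))) := by
  linear_combination
    β * iterate_succ_mul_cf_error hz0 hit hp0 hp1 hprec hq0 hq1 hqrec n

end ContinuedFractionError

theorem eisenstein_cf_error_factorization_general
    (z : ℂ) (a zs : ℕ → ℂ)
    (hz0 : zs 0 = z)
    (hne : ∀ n, zs n ≠ a n)
    (hit : ∀ n, zs (n + 1) = (zs n - a n)⁻¹)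
    (p q : ℕ → ℂ)
    (hp0 : p 0 = 1) (hp1 : p 1 = a 0)
    (hprec : ∀ n, p (n + 2) = a (n + 1) * p (n + 1) + p n)
    (hq0 : q 0 = 0) (hq1 : q 1 = 1)
    (hqrec : ∀ n, q (n + 2) = a (n + 1) * q (n + 1) + q n)
    :
    ∀ n : ℕ, ∀ α β : ℂ,
      α * q (n + 1) + β * q n ≠ 0 →
      ‖(α * q (n + 1) + β * q n) * z - (α * p (n + 1) + β * p n)‖ =
        ‖β * zs (n + 1) - α‖ * ‖q (n + 1) * z - p (n + 1)‖ := by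
  intro n α β _
  have hinv : ∀ n, zs (n + 1) * (zs n - a n) = 1 := fun n => by
    rw [hit, inv_mul_cancel₀ (sub_ne_zero.mpr (hne n))]
  rw [cf_error_linear_combination hz0 hinv hp0 hp1 hprec hq0 hq1 hqrec, norm_neg, norm_mul]

/-- For n ≥ 0 and α, β ∈ ℂ, if p = α·pₙ + β·p_{n−1} and q = α·qₙ + β·q_{n−1} with
q ≠ 0, then |q·z − p| = |β·z_{n+1} − α|·|qₙ·z − pₙ|.
(Here `p (n+1)`, `q (n+1)` denote pₙ, qₙ.) -/
theorem eisenstein_cf_error_factorization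
    (z : ℂ) (a zs : ℕ → ℂ)
    (ha : ∀ n, IsEis (a n))
    (hz0 : zs 0 = z)
    (hnear : ∀ n, ∀ b : ℂ, IsEis b → ‖zs n - a n‖ ≤ ‖zs n - b‖)
    (hne : ∀ n, zs n ≠ a n)
    (hit : ∀ n, zs (n + 1) = (zs n - a n)⁻¹)
    (p q : ℕ → ℂ)
    (hp0 : p 0 = 1) (hp1 : p 1 = a 0)
    (hprec : ∀ n, p (n + 2) = a (n + 1) * p (n + 1) + p n)
    (hq0 : q 0 = 0) (hq1 : q 1 = 1)
    (hqrec : ∀ n, q (n + 2) = a (n + 1) * q (n + 1) + q n)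
    (hqne : ∀ n, q (n + 1) ≠ 0)
    :
    ∀ n : ℕ, ∀ α β : ℂ,
      α * q (n + 1) + β * q n ≠ 0 →
      ‖(α * q (n + 1) + β * q n) * z - (α * p (n + 1) + β * p n)‖ =
        ‖β * zs (n + 1) - α‖ * ‖q (n + 1) * z - p (n + 1)‖ :=
  eisenstein_cf_error_factorization_general z a zs hz0 hne hit p q hp0 hp1 hprec hq0 hq1 hqrec
end
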